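/- arXiv:math-ph/0311041 — 3 statements merged into one kernel-verified Lean document; each statement's English description precedes it below -/
import Mathlib

section
/- Let N ≥ 1 and let m, n be arbitrary nonnegative integers. The polynomial q³ = (z^N + w^N)^{2n+1}·(z^N − w^N)^{2m+1} is a quasi-invariant of the dihedral system I₂(2N) with multiplicities (m,n): for every j = 0,…,2N−1 the polynomial (z − ε^j·w)^{2mⱼ+1} divides σⱼ(q³) − q³ in R. -/
open MvPolynomial Finset

noncomputable section

/-- The polynomial ring `R = ℂ[z,w]`. -/
abbrev R2 : Type := MvPolynomial (Fin 2) ℂ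

/-- `z`, the first variable. -/
def zP : R2 := X 0

/-- `w`, the second variable (playing the role of `z̄`). -/
def wP : R2 := X 1

/-- `ε = exp(πi/N)`, a primitive `2N`-th root of unity. -/
def eps (N : ℕ) : ℂ := Complex.exp ((Real.pi : ℂ) * Complex.I / (N : ℂ))

/-- The reflection `σⱼ : z ↦ ε^j w, w ↦ ε^{-j} z` as a `ℂ`-algebra endomorphism. -/
def dihRefl (N j : ℕ) : R2 →ₐ[ℂ] R2 :=
  aeval (fun k : Fin 2 => if k = 0 then C (eps N ^ j) * X 1 else C (eps N ^ (-(j : ℤ))) * X 0)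

/-- The multiplicity `mⱼ`: `m` for even `j`, `n` for odd `j`. -/
def mult (m n j : ℕ) : ℕ := if Even j then m else n

/-- Quasi-invariance for the dihedral system `I₂(2N)` with multiplicities `(m,n)`. -/
def IsQuasiInv (N m n : ℕ) (p : R2) : Prop :=
  ∀ j < 2 * N, (zP - C (eps N ^ j) * wP) ^ (2 * mult m n j + 1) ∣ dihRefl N j p - p

lemma eps_pow_N (N : ℕ) (hN : 1 ≤ N) : eps N ^ N = -1 := by
  have hN0 : (N : ℂ) ≠ 0 := Nat.cast_ne_zero.mpr (by omega)
  rw [eps, ← Complex.exp_nat_mul,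
    show (N : ℂ) * ((Real.pi : ℂ) * Complex.I / (N : ℂ)) = (Real.pi : ℂ) * Complex.I by
      field_simp]
  exact Complex.exp_pi_mul_I

theorem quasiInvariant_q3 (N m n : ℕ) (hN : 1 ≤ N) :
    IsQuasiInv N m n ((zP ^ N + wP ^ N) ^ (2 * n + 1) * (zP ^ N - wP ^ N) ^ (2 * m + 1)) := by
  intro j _
  set e : ℂ := eps N with he_def
  have he : e ^ N = -1 := eps_pow_N N hN
  set c : ℂ := (-1) ^ j with hc_def
  have hc2 : c * c = 1 := by
    rcases Nat.even_or_odd j with h | h <;>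
      simp [hc_def, h.neg_one_pow]
  have hcN : (e ^ j) ^ N = c := by
    rw [← pow_mul, mul_comm, pow_mul, he, hc_def]
  have hcN' : (e ^ (-(j : ℤ))) ^ N = c := by
    rw [zpow_neg, zpow_natCast, inv_pow, hcN, inv_eq_of_mul_eq_one_right hc2]
  have hz : dihRefl N j zP = C (e ^ j) * wP := by
    simp [dihRefl, zP, wP, he_def]
  have hw : dihRefl N j wP = C (e ^ (-(j : ℤ))) * zP := by
    simp [dihRefl, zP, wP, he_def]
  set A : R2 := zP ^ N + wP ^ N with hA_def
  set B : R2 := zP ^ N - wP ^ N with hB_def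
  have hA : dihRefl N j A = C c * A := by
    rw [hA_def, map_add, map_pow, map_pow, hz, hw, mul_pow, mul_pow, ← C_pow, ← C_pow,
      hcN, hcN']
    ring
  have hB : dihRefl N j B = C (-c) * B := by
    rw [hB_def, map_sub, map_pow, map_pow, hz, hw, mul_pow, mul_pow, ← C_pow, ← C_pow,
      hcN, hcN', C_neg]
    ring
  have hkey : (C c : R2) ^ (2 * n + 1) * (C (-c)) ^ (2 * m + 1) = -1 := by
    rw [← C_pow, ← C_pow, ← C_mul]
    have hm1 : ((-1 : ℂ)) ^ (2 * m + 1) = -1 := Odd.neg_one_pow ⟨m, by ring⟩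
    have hn1 : ((-1 : ℂ)) ^ (2 * n + 1) = -1 := Odd.neg_one_pow ⟨n, by ring⟩
    rcases Nat.even_or_odd j with h | h <;>
      simp [hc_def, h.neg_one_pow, hm1, hn1]
  have hq : dihRefl N j (A ^ (2 * n + 1) * B ^ (2 * m + 1))
      = -(A ^ (2 * n + 1) * B ^ (2 * m + 1)) := by
    rw [map_mul, map_pow, map_pow, hA, hB, mul_pow, mul_pow,
      show (C c : R2) ^ (2 * n + 1) * A ^ (2 * n + 1) * ((C (-c)) ^ (2 * m + 1) * B ^ (2 * m + 1))
        = ((C c : R2) ^ (2 * n + 1) * (C (-c)) ^ (2 * m + 1)) * (A ^ (2 * n + 1) * B ^ (2 * m + 1))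
        by ring, hkey]
    ring
  rw [hq]
  have hdvd : (zP - C (e ^ j) * wP) ^ (2 * mult m n j + 1)
      ∣ A ^ (2 * n + 1) * B ^ (2 * m + 1) := by
    have hbase : (zP - C (e ^ j) * wP) ∣ zP ^ N - C c * wP ^ N := by
      have := sub_dvd_pow_sub_pow zP (C (e ^ j) * wP) N
      rwa [mul_pow, ← C_pow, hcN] at this
    rcases Nat.even_or_odd j with h | h
    · have hc1 : c = 1 := h.neg_one_pow
      have hB' : (zP - C (e ^ j) * wP) ∣ B := by
        rwa [hc1, C_1, one_mul] at hbase
      rw [mult, if_pos h]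
      exact dvd_mul_of_dvd_right (pow_dvd_pow_of_dvd hB' _) _
    · have hc1 : c = -1 := h.neg_one_pow
      have hA' : (zP - C (e ^ j) * wP) ∣ A := by
        have := hbase
        rw [hc1] at this
        simpa [hA_def, sub_neg_eq_add] using this
      rw [mult, if_neg (Nat.not_even_iff_odd.mpr h)]
      exact dvd_mul_of_dvd_left (pow_dvd_pow_of_dvd hA' _) _
  exact dvd_sub (dvd_neg.mpr hdvd) hdvd

end
end

section
/- Assume m > n. Every homogeneous quasi-invariant p ∈ R of total degree strictly less than (2n+1)N is I₂(2N)-invariant: σⱼ(p) = p for all j = 0,…,2N−1. -/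
/-!
Write `p = ∑_{k ≤ d} a_k z^k w^(d-k)` and `ζ = ε^j`. Setting `w = 1` and applying `e(θ)` for the
Euler operator `θ = X d/dX` (which acts on `X^t` by the scalar `t`), divisibility of `σⱼ p - p` by
`(z - ζ w)^(2mⱼ+1)` becomes `∑_k a_k ζ^k (e(d-k) - e(k)) = 0` for every polynomial `e` of degree at
most `2mⱼ`. Averaging over `j` against characters isolates the `k` in a single residue class
modulo `2N` (for `deg e ≤ 2n`) and, using only even `j`, modulo `N` (for `deg e ≤ 2m`). Since
`d < (2n+1)N`, a class modulo `2N` has at most `n+1` elements and one modulo `N` at most `2n+1`, so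
Lagrange interpolation separates the points of a class: a class stable under `k ↦ d - k` (that is,
`ε^(2k) = ε^d`) has `a_(d-k) = a_k`, and any other class has `a_k = 0`. These two facts say exactly
that `σⱼ p = p`.
-/

open MvPolynomial Finset

noncomputable section

namespace Polynomial

variable {R : Type*} [CommRing R]

def eulerOp : Module.End R R[X] := LinearMap.mulLeft R X ∘ₗ derivative

theorem eulerOp_apply (f : R[X]) : eulerOp f = X * derivative f := rfl

theorem eulerOp_C_mul_X_pow (b : R) (t : ℕ) :
    eulerOp (C b * X ^ t) = (t : R) • (C b * X ^ t) := by
  rcases t with _ | t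
  · simp [eulerOp_apply]
  · rw [eulerOp_apply, derivative_C_mul_X_pow, smul_eq_C_mul]
    simp only [Nat.add_sub_cancel, C_mul, pow_succ]
    push_cast
    ring

theorem eval_aeval_eulerOp_C_mul_X_pow (e : R[X]) (b c : R) (t : ℕ) :
    (aeval eulerOp e (C b * X ^ t)).eval c = b * e.eval (t : R) * c ^ t := by
  have haeval : aeval eulerOp e (C b * X ^ t) = e.eval (t : R) • (C b * X ^ t) := by
    by_cases hb : C b * X ^ t = 0
    · simp [hb]
    exact Module.End.aeval_apply_of_hasEigenvector <| Module.End.hasEigenvector_iff.2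
      ⟨Module.End.mem_eigenspace_iff.2 (eulerOp_C_mul_X_pow b t), hb⟩
  rw [haeval, eval_smul]
  simp only [eval_mul, eval_C, eval_pow, eval_X, smul_eq_mul]
  ring

theorem X_sub_C_pow_dvd_eulerOp {c : R} {t : ℕ} {f : R[X]} (h : (X - C c) ^ (t + 1) ∣ f) :
    (X - C c) ^ t ∣ eulerOp f := by
  obtain ⟨g, rfl⟩ := h
  refine ⟨X * (C ((t : R) + 1) * g + (X - C c) * derivative g), ?_⟩
  rw [eulerOp_apply, derivative_mul, derivative_pow]
  simp only [derivative_sub, derivative_X, derivative_C, sub_zero, mul_one, Nat.add_sub_cancel]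
  push_cast
  ring

theorem X_sub_C_pow_dvd_eulerOp_pow {c : R} {s i : ℕ} {f : R[X]} (h : (X - C c) ^ s ∣ f)
    (hi : i ≤ s) : (X - C c) ^ (s - i) ∣ (eulerOp ^ i) f := by
  induction i with
  | zero => simpa using h
  | succ i ih =>
    rw [pow_succ', Module.End.mul_apply]
    apply X_sub_C_pow_dvd_eulerOp
    rw [← Nat.sub_add_comm hi, Nat.add_sub_add_right]
    exact ih (by omega)

theorem eval_aeval_eulerOp_eq_zero {c : R} {s : ℕ} {f : R[X]} (h : (X - C c) ^ s ∣ f)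
    {e : R[X]} (he : e.natDegree < s) : (aeval eulerOp e f).eval c = 0 := by
  rw [aeval_eq_sum_range, LinearMap.sum_apply, eval_finsetSum]
  refine sum_eq_zero fun i hi => ?_
  have hi : i < s := by rw [mem_range] at hi; omega
  have hdvd : X - C c ∣ (eulerOp ^ i) f :=
    (dvd_pow_self _ (by omega)).trans (X_sub_C_pow_dvd_eulerOp_pow h hi.le)
  rw [LinearMap.smul_apply, eval_smul, (dvd_iff_isRoot.mp hdvd).eq_zero, smul_zero]

end Polynomial

theorem Lagrange.eval_basis_natCast {K : Type*} [Field K] [CharZero K] {S : Finset ℕ}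
    {k₀ k : ℕ} (hk : k ∈ S) :
    (Lagrange.basis S (Nat.cast : ℕ → K) k₀).eval (k : K) = if k = k₀ then 1 else 0 := by
  split_ifs with h
  · subst h; exact Lagrange.eval_basis_self Nat.cast_injective.injOn hk
  · exact Lagrange.eval_basis_of_ne (Ne.symm h) hk

section ReflMoments

open scoped Polynomial

variable {K : Type*} [Field K]

def ReflMomentsVanish (a : ℕ → K) (d : ℕ) (S : Finset ℕ) (D : ℕ) : Prop :=
  ∀ e : K[X], e.natDegree ≤ D → ∑ k ∈ S, a k * (e.eval ↑(d - k) - e.eval ↑k) = 0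

namespace ReflMomentsVanish

variable {a : ℕ → K} {d D : ℕ} {S : Finset ℕ}

theorem mono (h : ReflMomentsVanish a d S D) {D' : ℕ} (hD : D' ≤ D) :
    ReflMomentsVanish a d S D' :=
  fun e he => h e (he.trans hD)

theorem of_union {T : Finset ℕ} (h : ReflMomentsVanish a d (S ∪ T) D) (hST : Disjoint S T)
    (hT : ∀ k ∈ T, a k = 0) : ReflMomentsVanish a d S D := fun e he => by
  have hzero : ∑ k ∈ T, a k * (e.eval ↑(d - k) - e.eval ↑k) = 0 :=
    sum_eq_zero fun k hk => by rw [hT k hk, zero_mul]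
  rw [← h e he, sum_union hST, hzero, add_zero]

variable [CharZero K]

theorem apply_sub_eq (h : ReflMomentsVanish a d S D) (hle : ∀ k ∈ S, k ≤ d)
    (hS : ∀ k ∈ S, d - k ∈ S) (hcard : #S ≤ D + 1) : ∀ k₀ ∈ S, a (d - k₀) = a k₀ := by
  intro k₀ hk₀
  set e := Lagrange.basis S (Nat.cast : ℕ → K) k₀
  have h₀ := h e (by rw [Lagrange.natDegree_basis Nat.cast_injective.injOn hk₀]; omega)
  have hev : ∀ k ∈ S, a k * (e.eval ((d - k : ℕ) : K) - e.eval (k : K)) =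
      (if k = d - k₀ then a k else 0) - if k = k₀ then a k else 0 := by
    intro k hk
    have := hle k hk; have := hle k₀ hk₀
    rw [Lagrange.eval_basis_natCast (hS k hk), Lagrange.eval_basis_natCast hk]
    simp only [show d - k = k₀ ↔ k = d - k₀ by omega]
    split_ifs <;> ring
  rw [sum_congr rfl hev, sum_sub_distrib, sum_ite_eq', sum_ite_eq', if_pos hk₀,
    if_pos (hS k₀ hk₀)] at h₀
  exact sub_eq_zero.mp h₀

theorem eq_zero (h : ReflMomentsVanish a d S D) (hle : ∀ k ∈ S, k ≤ d)
    (hS : ∀ k ∈ S, ∀ k' ∈ S, k + k' ≠ d) (hcard : 2 * #S ≤ D + 1) : ∀ k₀ ∈ S, a k₀ = 0 := by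
  intro k₀ hk₀
  set T := S ∪ S.image (fun k => d - k)
  have hcardT : #T ≤ D + 1 := calc
    #T ≤ #S + #(S.image (fun k => d - k)) := card_union_le _ _
    _ ≤ #S + #S := by grw [card_image_le]
    _ ≤ D + 1 := by omega
  have hk₀T : d - k₀ ∈ T := mem_union_right _ (mem_image_of_mem _ hk₀)
  set e := Lagrange.basis T (Nat.cast : ℕ → K) (d - k₀)
  have h₀ := h e (by rw [Lagrange.natDegree_basis Nat.cast_injective.injOn hk₀T]; omega)
  have hev : ∀ k ∈ S, a k * (e.eval ((d - k : ℕ) : K) - e.eval (k : K)) =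
      if k = k₀ then a k else 0 := by
    intro k hk
    have := hle k hk; have := hle k₀ hk₀; have := hS k hk k₀ hk₀
    rw [Lagrange.eval_basis_natCast (mem_union_right _ (mem_image_of_mem _ hk)),
      Lagrange.eval_basis_natCast (mem_union_left _ hk), if_neg (show k ≠ d - k₀ by omega)]
    simp only [show d - k = d - k₀ ↔ k = k₀ by omega]
    split_ifs <;> ring
  rwa [sum_congr rfl hev, sum_ite_eq', if_pos hk₀] at h₀

end ReflMomentsVanish

end ReflMoments

theorem Finset.card_le_div_add_one_of_forall_mod_eq {S : Finset ℕ} {M d : ℕ}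
    (hle : ∀ k ∈ S, k ≤ d) (hmod : ∀ k ∈ S, ∀ k' ∈ S, k % M = k' % M) : #S ≤ d / M + 1 := by
  have hmaps : ∀ k ∈ S, k / M ∈ range (d / M + 1) := fun k hk =>
    mem_range.mpr (Nat.lt_succ_of_le (Nat.div_le_div_right (hle k hk)))
  have hinj : Set.InjOn (· / M) S := fun k hk k' hk' hdiv => by
    rw [← Nat.div_add_mod k M, ← Nat.div_add_mod k' M, hmod k hk k' hk']
    exact congrArg (M * · + k' % M) hdiv
  simpa using card_le_card_of_injOn (· / M) hmaps hinj

theorem IsPrimitiveRoot.pow_eq_neg_one {R : Type*} [CommRing R] [NoZeroDivisors R] {ε : R}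
    {N : ℕ} (hε : IsPrimitiveRoot ε (2 * N)) (hN : 0 < N) : ε ^ N = -1 :=
  (hε.pow (by omega) (mul_comm 2 N)).eq_neg_one_of_two_right

section PowClass

variable {K : Type*} [Field K] [DecidableEq K]

def powClass (ε : K) (d ℓ : ℕ) : Finset ℕ := {k ∈ range (d + 1) | ε ^ k = ε ^ ℓ}

variable {ε : K} {d ℓ k : ℕ}

theorem mem_powClass : k ∈ powClass ε d ℓ ↔ k ≤ d ∧ ε ^ k = ε ^ ℓ := by
  simp [powClass]

theorem self_mem_powClass (hk : k ≤ d) : k ∈ powClass ε d k := mem_powClass.mpr ⟨hk, rfl⟩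

theorem sub_mem_powClass (hε : ε ≠ 0) (hℓ : (ε ^ ℓ) ^ 2 = ε ^ d) (hk : k ∈ powClass ε d ℓ) :
    d - k ∈ powClass ε d ℓ := by
  obtain ⟨hkd, hkℓ⟩ := mem_powClass.mp hk
  refine mem_powClass.mpr ⟨Nat.sub_le d k, mul_right_cancel₀ (pow_ne_zero k hε) ?_⟩
  rw [← pow_add, Nat.sub_add_cancel hkd, hkℓ, ← hℓ, sq]

theorem add_ne_of_mem_powClass (hℓ : (ε ^ ℓ) ^ 2 ≠ ε ^ d) {k' : ℕ} (hk : k ∈ powClass ε d ℓ)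
    (hk' : k' ∈ powClass ε d ℓ) : k + k' ≠ d := by
  rintro rfl
  rw [pow_add, (mem_powClass.mp hk).2, (mem_powClass.mp hk').2, sq] at hℓ
  exact hℓ rfl

theorem disjoint_powClass_add [CharZero K] {N : ℕ} (hε : ε ≠ 0) (hεN : ε ^ N = -1) :
    Disjoint (powClass ε d ℓ) (powClass ε d (ℓ + N)) := by
  refine disjoint_left.mpr fun k hk hk' => ?_
  have h := (mem_powClass.mp hk).2.symm.trans (mem_powClass.mp hk').2
  rw [pow_add, hεN, mul_neg_one] at h
  exact pow_ne_zero ℓ hε (self_eq_neg.mp h)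

theorem powClass_sq {N : ℕ} (hεN : ε ^ N = -1) :
    powClass (ε ^ 2) d ℓ = powClass ε d ℓ ∪ powClass ε d (ℓ + N) := by
  ext k
  simp only [mem_union, mem_powClass, pow_right_comm ε 2, sq_eq_sq_iff_eq_or_eq_neg, pow_add,
    hεN, mul_neg_one, and_or_left]

namespace IsPrimitiveRoot

theorem card_powClass_le {M q : ℕ} (hε : IsPrimitiveRoot ε M) (hd : d < M * (q + 1)) :
    #(powClass ε d ℓ) ≤ q + 1 := by
  have hM : M ≠ 0 := by rintro rfl; simp at hd
  have hmod : ∀ k ∈ powClass ε d ℓ, ∀ k' ∈ powClass ε d ℓ, k % M = k' % M := fun k hk k' hk' => by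
    rw [hε.eq_orderOf, ← (hε.isOfFinOrder hM).pow_inj_mod, (mem_powClass.mp hk).2,
      (mem_powClass.mp hk').2]
  have := Nat.div_lt_of_lt_mul hd
  exact (card_le_div_add_one_of_forall_mod_eq (fun k hk => (mem_powClass.mp hk).1) hmod).trans
    (by omega)

theorem sum_powClass_eq_zero {M : ℕ} [NeZero M] (hε : IsPrimitiveRoot ε M) {c : ℕ → K}
    (h : ∀ j < M, ∑ k ∈ range (d + 1), c k * (ε ^ j) ^ k = 0) (ℓ : ℕ) :
    ∑ k ∈ powClass ε d ℓ, c k = 0 := by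
  have hε₀ : ε ≠ 0 := hε.ne_zero (NeZero.ne M)
  have hM : (M : K) ≠ 0 := hε.neZero'.out
  have hgeom : ∀ k, ∑ j ∈ range M, (ε ^ k / ε ^ ℓ) ^ j =
      if ε ^ k = ε ^ ℓ then (M : K) else 0 := by
    intro k
    split_ifs with hk
    · simp [hk, div_self (pow_ne_zero _ hε₀)]
    · have hne : ε ^ k / ε ^ ℓ ≠ 1 := fun h1 => hk ((div_eq_one_iff_eq (pow_ne_zero _ hε₀)).mp h1)
      rw [geom_sum_eq hne, div_pow, ← pow_mul, ← pow_mul, mul_comm k, mul_comm ℓ, pow_mul,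
        pow_mul, hε.pow_eq_one, one_pow, one_pow, div_one, sub_self, zero_div]
  suffices (M : K) * ∑ k ∈ powClass ε d ℓ, c k = 0 from (mul_eq_zero.mp this).resolve_left hM
  calc (M : K) * ∑ k ∈ powClass ε d ℓ, c k
      = ∑ k ∈ range (d + 1), c k * ∑ j ∈ range M, (ε ^ k / ε ^ ℓ) ^ j := by
        simp only [powClass, hgeom, mul_ite, mul_zero, mul_sum, mul_comm, sum_filter]
    _ = ∑ j ∈ range M, (∑ k ∈ range (d + 1), c k * (ε ^ j) ^ k) / (ε ^ ℓ) ^ j := by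
        simp only [mul_sum, sum_div]
        rw [sum_comm]
        refine sum_congr rfl fun j _ => sum_congr rfl fun k _ => ?_
        rw [div_pow, ← pow_mul, ← pow_mul, mul_comm k j, pow_mul, mul_div_assoc]
    _ = 0 := sum_eq_zero fun j hj => by rw [h j (mem_range.mp hj), zero_div]

end IsPrimitiveRoot

variable {a : ℕ → K} {D : ℕ}

theorem reflMomentsVanish_powClass {M : ℕ} [NeZero M] (hε : IsPrimitiveRoot ε M)
    (h : ∀ j < M, ReflMomentsVanish (fun k => a k * (ε ^ j) ^ k) d (range (d + 1)) D) (ℓ : ℕ) :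
    ReflMomentsVanish a d (powClass ε d ℓ) D := fun e he =>
  hε.sum_powClass_eq_zero (fun j hj => by
    rw [← h j hj e he]
    exact sum_congr rfl fun k _ => mul_right_comm _ _ _) ℓ

namespace ReflMomentsVanish

variable [CharZero K]

theorem apply_sub_eq_of_sq_eq (h : ReflMomentsVanish a d (powClass ε d ℓ) D) (hε : ε ≠ 0)
    (hℓ : (ε ^ ℓ) ^ 2 = ε ^ d) (hcard : #(powClass ε d ℓ) ≤ D + 1) :
    ∀ k ∈ powClass ε d ℓ, a (d - k) = a k :=
  h.apply_sub_eq (fun _ hk => (mem_powClass.mp hk).1) (fun _ hk => sub_mem_powClass hε hℓ hk)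
    hcard

theorem eq_zero_of_sq_ne (h : ReflMomentsVanish a d (powClass ε d ℓ) D)
    (hℓ : (ε ^ ℓ) ^ 2 ≠ ε ^ d) (hcard : 2 * #(powClass ε d ℓ) ≤ D + 1) :
    ∀ k ∈ powClass ε d ℓ, a k = 0 :=
  h.eq_zero (fun _ hk => (mem_powClass.mp hk).1)
    (fun _ hk _ hk' => add_ne_of_mem_powClass hℓ hk hk') hcard

end ReflMomentsVanish

end PowClass

section DihedralCoefficients

variable {K : Type*} [Field K] [CharZero K] [DecidableEq K] {ε : K} {N m n d k : ℕ}
  {a : ℕ → K}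

theorem IsPrimitiveRoot.eq_zero_of_sq_ne (hε : IsPrimitiveRoot ε (2 * N)) (hmn : n < m)
    (hd : d < (2 * n + 1) * N) (h₂ : ∀ ℓ, ReflMomentsVanish a d (powClass ε d ℓ) (2 * n))
    (h₁ : ∀ ℓ, ReflMomentsVanish a d (powClass (ε ^ 2) d ℓ) (2 * m)) (hk : k ≤ d)
    (hsq : (ε ^ k) ^ 2 ≠ ε ^ d) : a k = 0 := by
  have hN : 0 < N := Nat.pos_of_ne_zero (by rintro rfl; simp at hd)
  have hεN := hε.pow_eq_neg_one hN
  have hsq' : (ε ^ (k + N)) ^ 2 ≠ ε ^ d := by rwa [pow_add, hεN, mul_neg_one, neg_sq]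
  have hdisj : Disjoint (powClass ε d k) (powClass ε d (k + N)) :=
    disjoint_powClass_add (hε.ne_zero (by omega)) hεN
  have hcard₁ : #(powClass ε d k) ≤ n + 1 := hε.card_powClass_le (by nlinarith)
  have hcard₂ : #(powClass ε d k) + #(powClass ε d (k + N)) ≤ 2 * n + 1 := by
    rw [← card_union_of_disjoint hdisj, ← powClass_sq hεN]
    exact (hε.pow (by omega) rfl).card_powClass_le (by linarith)
  by_cases hsmall : #(powClass ε d k) ≤ n
  · exact (h₂ k).eq_zero_of_sq_ne hsq (by omega) k (self_mem_powClass hk)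
  · -- The class of `k` modulo `2N` has `n + 1` elements, too many for degree `2n`; but then the
    -- other half `k + N` of its class modulo `N` is small and vanishes, and the relations of
    -- degree `2m ≥ 2n + 2` coming from the even reflections apply to the class of `k` alone.
    have hzero := (h₂ (k + N)).eq_zero_of_sq_ne hsq' (by omega)
    have h₁k := (powClass_sq (d := d) (ℓ := k) hεN ▸ h₁ k).of_union hdisj hzero
    exact h₁k.eq_zero_of_sq_ne hsq (by omega) k (self_mem_powClass hk)

theorem IsPrimitiveRoot.apply_sub_mul_pow_mul_inv_pow_eq (hε : IsPrimitiveRoot ε (2 * N))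
    (hmn : n < m) (hd : d < (2 * n + 1) * N)
    (h : ∀ j < 2 * N, ReflMomentsVanish (fun k => a k * (ε ^ j) ^ k) d (range (d + 1))
      (2 * mult m n j)) (j : ℕ) (hk : k ≤ d) :
    a (d - k) * (ε ^ j) ^ (d - k) * (ε ^ j)⁻¹ ^ k = a k := by
  have hN : 0 < N := Nat.pos_of_ne_zero (by rintro rfl; simp at hd)
  have : NeZero (2 * N) := ⟨by omega⟩
  have : NeZero N := ⟨by omega⟩
  have hε₀ : ε ≠ 0 := hε.ne_zero (by omega)
  have h₂ : ∀ ℓ, ReflMomentsVanish a d (powClass ε d ℓ) (2 * n) :=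
    reflMomentsVanish_powClass hε fun j hj =>
      (h j hj).mono (by unfold mult; split_ifs <;> omega)
  have h₁ : ∀ ℓ, ReflMomentsVanish a d (powClass (ε ^ 2) d ℓ) (2 * m) :=
    reflMomentsVanish_powClass (hε.pow (by omega) rfl) fun u hu => by
      simpa only [← pow_mul, mult, Nat.even_mul, even_two, true_or, if_true] using
        h (2 * u) (by omega)
  by_cases hsq : (ε ^ k) ^ 2 = ε ^ d
  · have hpow : ε ^ (d - k) = ε ^ k :=
      (mem_powClass.mp (sub_mem_powClass hε₀ hsq (self_mem_powClass hk))).2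
    have hsym := (h₂ k).apply_sub_eq_of_sq_eq hε₀ hsq
      ((hε.card_powClass_le (q := n) (by nlinarith)).trans (by omega)) k (self_mem_powClass hk)
    rw [hsym, pow_right_comm, hpow, pow_right_comm, mul_assoc, ← mul_pow,
      mul_inv_cancel₀ (pow_ne_zero j hε₀), one_pow, mul_one]
  · have hsq' : (ε ^ (d - k)) ^ 2 ≠ ε ^ d := fun h' => hsq <| mul_left_cancel₀
      (pow_ne_zero 2 (pow_ne_zero (d - k) hε₀)) (by
        rw [← mul_pow, ← pow_add, Nat.sub_add_cancel hk, h', sq])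
    rw [hε.eq_zero_of_sq_ne hmn hd h₂ h₁ hk hsq,
      hε.eq_zero_of_sq_ne hmn hd h₂ h₁ (Nat.sub_le d k) hsq', zero_mul, zero_mul]

end DihedralCoefficients

section BinaryForm

variable {R : Type*} [CommSemiring R]

def binaryForm (a : ℕ → R) (d : ℕ) : MvPolynomial (Fin 2) R :=
  ∑ k ∈ range (d + 1), C (a k) * X 0 ^ k * X 1 ^ (d - k)

theorem binaryForm_congr {a b : ℕ → R} {d : ℕ} (h : ∀ k ≤ d, a k = b k) :
    binaryForm a d = binaryForm b d :=
  sum_congr rfl fun k hk => by rw [h k (Nat.lt_succ_iff.mp (mem_range.mp hk))]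

theorem MvPolynomial.monomial_single_add_single (k t : ℕ) (b : R) :
    monomial (Finsupp.single 0 k + Finsupp.single 1 t) b = C b * X (0 : Fin 2) ^ k * X 1 ^ t := by
  rw [X_pow_eq_monomial, X_pow_eq_monomial, mul_assoc, monomial_mul, C_mul_monomial, one_mul,
    mul_one]

theorem MvPolynomial.IsHomogeneous.exists_eq_binaryForm {p : MvPolynomial (Fin 2) R} {d : ℕ}
    (hp : p.IsHomogeneous d) : ∃ a : ℕ → R, p = binaryForm a d := by
  set u : ℕ → Fin 2 →₀ ℕ := fun k => Finsupp.single 0 k + Finsupp.single 1 (d - k)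
  refine ⟨fun k => coeff (u k) p, ?_⟩
  have hu : Set.InjOn u (range (d + 1)) := fun k _ k' _ h => by
    simpa [u] using DFunLike.congr_fun h 0
  have hsupp : p.support ⊆ (range (d + 1)).image u := by
    intro v hv
    have hdeg : v 0 + v 1 = d := by
      simpa [Finsupp.weight_apply, Finsupp.sum_fintype, Fin.sum_univ_two] using
        hp (mem_support_iff.mp hv)
    refine mem_image.mpr ⟨v 0, mem_range.mpr (by omega), ?_⟩
    ext i; fin_cases i <;> simp [u, ← hdeg]
  calc p = ∑ v ∈ p.support, monomial v (coeff v p) := p.as_sum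
    _ = ∑ v ∈ (range (d + 1)).image u, monomial v (coeff v p) :=
        sum_subset hsupp fun v _ hv => by rw [notMem_support_iff.mp hv, monomial_zero]
    _ = binaryForm (fun k => coeff (u k) p) d := by
        rw [sum_image hu]
        exact sum_congr rfl fun k _ => monomial_single_add_single _ _ _

def dehomogenize : MvPolynomial (Fin 2) R →ₐ[R] Polynomial R := aeval ![Polynomial.X, 1]

theorem dehomogenize_binaryForm (a : ℕ → R) (d : ℕ) :
    dehomogenize (binaryForm a d) =
      ∑ k ∈ range (d + 1), Polynomial.C (a k) * Polynomial.X ^ k := by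
  simp [dehomogenize, binaryForm, Polynomial.C_eq_algebraMap]

end BinaryForm

theorem dehomogenize_X_sub_C_mul_X {R : Type*} [CommRing R] (c : R) :
    dehomogenize (X 0 - C c * X 1) = Polynomial.X - Polynomial.C c := by
  simp [dehomogenize, Polynomial.C_eq_algebraMap]

theorem eps_isPrimitiveRoot {N : ℕ} (hN : 0 < N) : IsPrimitiveRoot (eps N) (2 * N) := by
  convert Complex.isPrimitiveRoot_exp (2 * N) (by omega) using 2
  rw [eps]
  push_cast
  field_simp

theorem dihRefl_C_mul_X_pow_mul_X_pow (N j k t : ℕ) (b : ℂ) :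
    dihRefl N j (C b * X 0 ^ k * X 1 ^ t) =
      C (b * (eps N ^ j) ^ k * (eps N ^ j)⁻¹ ^ t) * X 0 ^ t * X 1 ^ k := by
  simp only [dihRefl, map_mul, map_pow, aeval_C, aeval_X, algebraMap_eq, zpow_neg, zpow_natCast]
  simp only [Fin.isValue, ↓reduceIte, one_ne_zero]
  ring

theorem dihRefl_binaryForm (N j : ℕ) (a : ℕ → ℂ) (d : ℕ) :
    dihRefl N j (binaryForm a d) =
      binaryForm (fun k => a (d - k) * (eps N ^ j) ^ (d - k) * (eps N ^ j)⁻¹ ^ k) d := by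
  rw [binaryForm, map_sum, binaryForm, ← sum_range_reflect]
  refine sum_congr rfl fun k hk => ?_
  rw [dihRefl_C_mul_X_pow_mul_X_pow, Nat.add_sub_cancel,
    Nat.sub_sub_self (Nat.lt_succ_iff.mp (mem_range.mp hk))]

theorem reflMomentsVanish_of_dvd {N j d D : ℕ} {a : ℕ → ℂ}
    (hdvd : (zP - C (eps N ^ j) * wP) ^ (D + 1) ∣ dihRefl N j (binaryForm a d) - binaryForm a d) :
    ReflMomentsVanish (fun k => a k * (eps N ^ j) ^ k) d (range (d + 1)) D := by
  intro e he
  set ζ := eps N ^ j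
  have hζ : ζ ≠ 0 := pow_ne_zero _ (Complex.exp_ne_zero _)
  have h := Polynomial.eval_aeval_eulerOp_eq_zero (c := ζ) (by
    simpa only [map_pow, zP, wP, dehomogenize_X_sub_C_mul_X] using map_dvd dehomogenize hdvd)
    (Nat.lt_succ_of_le he)
  rw [map_sub, dihRefl_binaryForm, dehomogenize_binaryForm, dehomogenize_binaryForm, map_sub,
    map_sum, map_sum, Polynomial.eval_sub, Polynomial.eval_finsetSum, Polynomial.eval_finsetSum,
    ← sum_range_reflect] at h
  rw [← h, ← sum_sub_distrib]
  refine sum_congr rfl fun k hk => ?_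
  have hk : k ≤ d := Nat.lt_succ_iff.mp (mem_range.mp hk)
  simp only [Polynomial.eval_aeval_eulerOp_C_mul_X_pow, Nat.add_sub_cancel, Nat.sub_sub_self hk]
  have hinv : ζ⁻¹ ^ (d - k) * ζ ^ (d - k) = 1 := by rw [← mul_pow, inv_mul_cancel₀ hζ, one_pow]
  linear_combination -(a k * ζ ^ k * e.eval ↑(d - k)) * hinv

theorem lowDegree_quasiInvariant_is_invariant_general (N m n : ℕ) (hmn : n < m)
    (p : R2) (d : ℕ) (hhom : p.IsHomogeneous d) (hd : d < (2 * n + 1) * N)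
    (hp : IsQuasiInv N m n p) :
    ∀ j < 2 * N, dihRefl N j p = p := by
  intro j hj
  obtain ⟨a, rfl⟩ := hhom.exists_eq_binaryForm
  have hrel : ∀ j < 2 * N, ReflMomentsVanish (fun k => a k * (eps N ^ j) ^ k) d (range (d + 1))
      (2 * mult m n j) := fun j hj => reflMomentsVanish_of_dvd (hp j hj)
  rw [dihRefl_binaryForm]
  exact binaryForm_congr fun k hk =>
    (eps_isPrimitiveRoot (by omega)).apply_sub_mul_pow_mul_inv_pow_eq hmn hd hrel j hk

theorem lowDegree_quasiInvariant_is_invariant (N m n : ℕ) (hN : 1 ≤ N) (hmn : n < m)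
    (p : R2) (d : ℕ) (hhom : p.IsHomogeneous d) (hd : d < (2 * n + 1) * N)
    (hp : IsQuasiInv N m n p) :
    ∀ j < 2 * N, dihRefl N j p = p :=
  lowDegree_quasiInvariant_is_invariant_general N m n hmn p d hhom hd hp

end
end

section
/- Assume n ≤ m. The quasi-invariant q² = (z^N − w^N)^{2m+1} is annihilated by the Calogero–Moser operator 𝓛₁, i.e. the polynomial identity (∏_{k=0}^{2N−1}(ε^k·w − z))·∂z∂w q² = ∑_{k=0}^{2N−1} m_k·(∏_{0≤j≤2N−1, j≠k}(ε^j·w − z))·(ε^k·∂z q² − ∂w q²) holds in R. -/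
open MvPolynomial Finset

noncomputable section

/-- `p` is annihilated by the Calogero–Moser operator
`𝓛₁ = 4∂z∂w − 4∑ₖ mₖ(ε^k ∂z − ∂w)/(ε^k w − z)`, expressed as a polynomial identity
after clearing denominators. -/
def AnnL1 (N m n : ℕ) (p : R2) : Prop :=
  (∏ k ∈ Finset.range (2 * N), (C (eps N ^ k) * wP - zP)) *
      (pderiv (0 : Fin 2) (pderiv (1 : Fin 2) p)) =
    ∑ k ∈ Finset.range (2 * N),
      C ((mult m n k : ℕ) : ℂ) *
        (∏ j ∈ (Finset.range (2 * N)).erase k, (C (eps N ^ j) * wP - zP)) *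
        (C (eps N ^ k) * pderiv (0 : Fin 2) p - pderiv (1 : Fin 2) p)

/-! Split the mirrors into their two orbits. The even-indexed linear forms multiply to
`±F` and the odd-indexed ones to `±G`, where `F = z^N - w^N` and `G = z^N + w^N`. Over one orbit
with product `A`, the product rule turns `∑ₖ (∏_{j ≠ k} (εʲw - z)) (εᵏ∂z p - ∂w p)` into
`∂w A ∂z p + ∂z A ∂w p`, so `𝓛₁ p = 0` becomes
`F G ∂z∂w p = m G (∂w F ∂z p + ∂z F ∂w p) + n F (∂w G ∂z p + ∂z G ∂w p)`.
For `p = φ(F)` the `n`-term vanishes because `∂z G = ∂z F` and `∂w G = -∂w F`, and since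
`∂z∂w F = 0` what remains is `F φ''(F) = 2m φ'(F)`, which holds for `φ(t) = t^(2m+1)`. -/

namespace Derivation

variable {R A M : Type*} [CommSemiring R] [CommSemiring A] [AddCommMonoid M] [Algebra R A]
  [Module A M] [Module R M]

theorem leibniz_finset_prod {ι : Type*} [DecidableEq ι] (D : Derivation R A M) (s : Finset ι)
    (f : ι → A) : D (∏ i ∈ s, f i) = ∑ i ∈ s, (∏ j ∈ s.erase i, f j) • D (f i) := by
  induction s using Finset.induction_on with
  | empty => simp
  | insert a s ha ih =>
    rw [prod_insert ha, leibniz, ih, sum_insert ha, erase_insert ha, smul_sum, add_comm]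
    congr 1
    refine sum_congr rfl fun i hi => ?_
    rw [erase_insert_of_ne (ne_of_mem_of_not_mem hi ha).symm,
      prod_insert fun h => ha (mem_of_mem_erase h), mul_smul]

end Derivation

theorem Finset.sum_filter_prod_erase_mul {ι R : Type*} [DecidableEq ι] [CommSemiring R]
    (s : Finset ι) (p : ι → Prop) [DecidablePred p] (g h : ι → R) :
    ∑ k ∈ s with p k, (∏ j ∈ s.erase k, g j) * h k =
      (∏ j ∈ s with ¬p j, g j) * ∑ k ∈ s with p k, (∏ j ∈ (s.filter p).erase k, g j) * h k := by
  rw [mul_sum]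
  refine sum_congr rfl fun k hk => ?_
  have hk' : k ∉ s.filter (¬p ·) := fun h => (mem_filter.mp h).2 (mem_filter.mp hk).2
  rw [← prod_filter_mul_prod_filter_not (s.erase k) p, filter_erase, filter_erase,
    erase_eq_of_notMem hk']
  ring

theorem Finset.prod_range_two_mul_filter_even {M : Type*} [CommMonoid M] (N : ℕ) (f : ℕ → M) :
    ∏ k ∈ range (2 * N) with Even k, f k = ∏ t ∈ range N, f (2 * t) := by
  rw [← prod_image (fun a _ b _ h => by simp only at h; omega : Set.InjOn (fun t => 2 * t) _)]
  congr 1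
  ext k
  simp only [mem_filter, mem_range, mem_image, Nat.even_iff]
  constructor
  · exact fun h => ⟨k / 2, by omega⟩
  · rintro ⟨t, ht, rfl⟩
    omega

theorem Finset.prod_range_two_mul_filter_not_even {M : Type*} [CommMonoid M] (N : ℕ)
    (f : ℕ → M) : ∏ k ∈ range (2 * N) with ¬Even k, f k = ∏ t ∈ range N, f (2 * t + 1) := by
  rw [← prod_image (fun a _ b _ h => by simp only at h; omega : Set.InjOn (fun t => 2 * t + 1) _)]
  congr 1
  ext k
  simp only [mem_filter, mem_range, mem_image, Nat.not_even_iff]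
  constructor
  · exact fun h => ⟨k / 2, by omega⟩
  · rintro ⟨t, ht, rfl⟩
    omega

theorem IsPrimitiveRoot.prod_range_pow_mul_sub {R : Type*} [CommRing R] [IsDomain R] {ζ : R}
    {N : ℕ} (hζ : IsPrimitiveRoot ζ N) (hN : 0 < N) (x y : R) :
    ∏ t ∈ range N, (ζ ^ t * y - x) = (-1) ^ N * (x ^ N - y ^ N) := by
  have h := congrArg (Polynomial.eval x) (X_pow_sub_C_eq_prod hζ hN (rfl : y ^ N = y ^ N))
  simp only [Polynomial.eval_sub, Polynomial.eval_pow, Polynomial.eval_X, Polynomial.eval_C,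
    Polynomial.eval_prod] at h
  calc ∏ t ∈ range N, (ζ ^ t * y - x) = ∏ t ∈ range N, (-1) * (x - ζ ^ t * y) :=
        prod_congr rfl fun t _ => by ring
    _ = (-1) ^ N * (x ^ N - y ^ N) := by rw [prod_mul_distrib, prod_const, card_range, h]

theorem eps_pow_self {N : ℕ} (hN : 0 < N) : eps N ^ N = -1 := by
  rw [eps, ← Complex.exp_nat_mul, mul_div_cancel₀ _ (Nat.cast_ne_zero.mpr hN.ne'),
    Complex.exp_pi_mul_I]

theorem isPrimitiveRoot_eps_sq {N : ℕ} (hN : 0 < N) : IsPrimitiveRoot (eps N ^ 2) N := by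
  convert Complex.isPrimitiveRoot_exp N hN.ne' using 1
  rw [eps, ← Complex.exp_nat_mul]
  ring_nf

@[simp] theorem pderiv_zero_zP : pderiv 0 zP = 1 := pderiv_X_self 0
@[simp] theorem pderiv_one_zP : pderiv 1 zP = 0 := pderiv_X_of_ne (by decide)
@[simp] theorem pderiv_zero_wP : pderiv 0 wP = 0 := pderiv_X_of_ne (by decide)
@[simp] theorem pderiv_one_wP : pderiv 1 wP = 1 := pderiv_X_self 1

theorem sum_prod_erase_mul_eq_pderiv {ι : Type*} [DecidableEq ι] (s : Finset ι) (c : ι → ℂ)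
    (a b : R2) :
    ∑ k ∈ s, (∏ j ∈ s.erase k, (C (c j) * wP - zP)) * (C (c k) * a - b) =
      pderiv 1 (∏ j ∈ s, (C (c j) * wP - zP)) * a +
        pderiv 0 (∏ j ∈ s, (C (c j) * wP - zP)) * b := by
  simp only [Derivation.leibniz_finset_prod, smul_eq_mul, map_sub, pderiv_C_mul, pderiv_zero_zP,
    pderiv_one_zP, pderiv_zero_wP, pderiv_one_wP, sum_mul, ← sum_add_distrib]
  exact sum_congr rfl fun k _ => by ring

theorem prod_filter_even_mirrors {N : ℕ} (hN : 0 < N) :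
    ∏ k ∈ range (2 * N) with Even k, (C (eps N ^ k) * wP - zP) =
      C ((-1) ^ N) * (zP ^ N - wP ^ N) := by
  have hζ : IsPrimitiveRoot (C (eps N ^ 2) : R2) N :=
    (isPrimitiveRoot_eps_sq hN).map_of_injective (C_injective _ _)
  have hC : C ((-1) ^ N) = ((-1) ^ N : R2) := by simp
  calc ∏ k ∈ range (2 * N) with Even k, (C (eps N ^ k) * wP - zP)
      = ∏ t ∈ range N, (C (eps N ^ 2) ^ t * wP - zP) := by
        rw [prod_range_two_mul_filter_even]
        simp only [pow_mul, map_pow]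
    _ = C ((-1) ^ N) * (zP ^ N - wP ^ N) := by rw [hζ.prod_range_pow_mul_sub hN, hC]

theorem prod_filter_not_even_mirrors {N : ℕ} (hN : 0 < N) :
    ∏ k ∈ range (2 * N) with ¬Even k, (C (eps N ^ k) * wP - zP) =
      C ((-1) ^ N) * (zP ^ N + wP ^ N) := by
  have hζ : IsPrimitiveRoot (C (eps N ^ 2) : R2) N :=
    (isPrimitiveRoot_eps_sq hN).map_of_injective (C_injective _ _)
  have hC : C ((-1) ^ N) = ((-1) ^ N : R2) := by simp
  calc ∏ k ∈ range (2 * N) with ¬Even k, (C (eps N ^ k) * wP - zP)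
      = ∏ t ∈ range N, (C (eps N ^ 2) ^ t * (C (eps N) * wP) - zP) := by
        rw [prod_range_two_mul_filter_not_even]
        simp only [pow_succ, pow_mul, map_mul, map_pow, mul_assoc]
    _ = C ((-1) ^ N) * (zP ^ N + wP ^ N) := by
        rw [hζ.prod_range_pow_mul_sub hN, mul_pow, ← map_pow, eps_pow_self hN, hC]
        simp

theorem sum_mult_prod_erase_eq (N m n : ℕ) (a b : R2) :
    ∑ k ∈ range (2 * N), C ((mult m n k : ℕ) : ℂ) *
        (∏ j ∈ (range (2 * N)).erase k, (C (eps N ^ j) * wP - zP)) * (C (eps N ^ k) * a - b) =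
      C (m : ℂ) * (∏ k ∈ range (2 * N) with ¬Even k, (C (eps N ^ k) * wP - zP)) *
          (pderiv 1 (∏ k ∈ range (2 * N) with Even k, (C (eps N ^ k) * wP - zP)) * a +
            pderiv 0 (∏ k ∈ range (2 * N) with Even k, (C (eps N ^ k) * wP - zP)) * b) +
        C (n : ℂ) * (∏ k ∈ range (2 * N) with Even k, (C (eps N ^ k) * wP - zP)) *
          (pderiv 1 (∏ k ∈ range (2 * N) with ¬Even k, (C (eps N ^ k) * wP - zP)) * a +
            pderiv 0 (∏ k ∈ range (2 * N) with ¬Even k, (C (eps N ^ k) * wP - zP)) * b) := by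
  rw [← sum_filter_add_sum_filter_not _ Even]
  congr 1
  · calc _ = C (m : ℂ) * ∑ k ∈ range (2 * N) with Even k,
            (∏ j ∈ (range (2 * N)).erase k, (C (eps N ^ j) * wP - zP)) *
              (C (eps N ^ k) * a - b) := by
          rw [mul_sum]
          refine sum_congr rfl fun k hk => ?_
          rw [mult, if_pos (mem_filter.mp hk).2, mul_assoc]
      _ = _ := by rw [sum_filter_prod_erase_mul, sum_prod_erase_mul_eq_pderiv, mul_assoc]
  · calc _ = C (n : ℂ) * ∑ k ∈ range (2 * N) with ¬Even k,
            (∏ j ∈ (range (2 * N)).erase k, (C (eps N ^ j) * wP - zP)) *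
              (C (eps N ^ k) * a - b) := by
          rw [mul_sum]
          refine sum_congr rfl fun k hk => ?_
          rw [mult, if_neg (mem_filter.mp hk).2, mul_assoc]
      _ = _ := by
          rw [sum_filter_prod_erase_mul, sum_prod_erase_mul_eq_pderiv, mul_assoc]
          simp only [not_not]

theorem annL1_iff {N : ℕ} (hN : 0 < N) (m n : ℕ) (p : R2) :
    AnnL1 N m n p ↔
      (zP ^ N - wP ^ N) * (zP ^ N + wP ^ N) * pderiv 0 (pderiv 1 p) =
        C (m : ℂ) * (zP ^ N + wP ^ N) *
            (pderiv 1 (zP ^ N - wP ^ N) * pderiv 0 p +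
              pderiv 0 (zP ^ N - wP ^ N) * pderiv 1 p) +
          C (n : ℂ) * (zP ^ N - wP ^ N) *
            (pderiv 1 (zP ^ N + wP ^ N) * pderiv 0 p +
              pderiv 0 (zP ^ N + wP ^ N) * pderiv 1 p) := by
  have hs : (C ((-1) ^ N) * C ((-1) ^ N) : R2) ≠ 0 := by
    rw [← map_mul, ← mul_pow]
    simp
  rw [AnnL1, ← prod_filter_mul_prod_filter_not _ Even, sum_mult_prod_erase_eq,
    prod_filter_even_mirrors hN, prod_filter_not_even_mirrors hN]
  simp only [pderiv_C_mul]
  refine Iff.trans ?_ (mul_right_inj' hs)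
  constructor <;> intro h <;> linear_combination h

theorem q2_mHarmonic_L1_general (N m n : ℕ) (hN : 1 ≤ N) :
    AnnL1 N m n ((zP ^ N - wP ^ N) ^ (2 * m + 1)) := by
  rw [annL1_iff hN]
  set F := zP ^ N - wP ^ N
  have hF0 : pderiv 0 F = N * zP ^ (N - 1) := by simp [F]
  have hF1 : pderiv 1 F = -(N * wP ^ (N - 1)) := by simp [F]
  have hF01 : pderiv 0 (pderiv 1 F) = 0 := by simp [F]
  have hG0 : pderiv 0 (zP ^ N + wP ^ N) = N * zP ^ (N - 1) := by simp
  have hG1 : pderiv 1 (zP ^ N + wP ^ N) = N * wP ^ (N - 1) := by simp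
  have hpow : ∀ i, pderiv i (F ^ (2 * m + 1)) =
      ((2 * m + 1 : ℕ) : R2) * F ^ (2 * m) * pderiv i F := fun i => by
    rw [Derivation.leibniz_pow, Nat.add_sub_cancel, nsmul_eq_mul, smul_eq_mul, mul_assoc]
  have h01 : pderiv 0 (pderiv 1 (F ^ (2 * m + 1))) =
      ((2 * m + 1 : ℕ) : R2) * ((2 * m : ℕ) * F ^ (2 * m - 1)) * pderiv 0 F * pderiv 1 F := by
    rw [hpow, pderiv_mul, pderiv_mul, Derivation.map_natCast, Derivation.leibniz_pow, hF01]
    simp only [nsmul_eq_mul, smul_eq_mul, mul_zero, add_zero]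
    ring
  have hFF : F * ((2 * m : ℕ) * F ^ (2 * m - 1)) = (2 * m : ℕ) * F ^ (2 * m) := by
    rcases Nat.eq_zero_or_pos m with rfl | hm
    · simp
    · rw [mul_left_comm, ← pow_succ', Nat.sub_add_cancel (by omega)]
  rw [h01, hpow, hpow, hF0, hF1, hG0, hG1]
  simp only [map_natCast]
  push_cast at hFF ⊢
  linear_combination
    (2 * (m : R2) + 1) * (zP ^ N + wP ^ N) * (N * zP ^ (N - 1)) * (-(N * wP ^ (N - 1))) * hFF

theorem q2_mHarmonic_L1 (N m n : ℕ) (hN : 1 ≤ N) (hnm : n ≤ m) :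
    AnnL1 N m n ((zP ^ N - wP ^ N) ^ (2 * m + 1)) :=
  q2_mHarmonic_L1_general N m n hN
end
end
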